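/- For 0 < α ≤ π/4, define Y = Y₁ ⊗ (|0⟩⟨0| + |1⟩⟨1|) + Y₂ ⊗ |2⟩⟨2| + ((1+cos²α)/cos²α) Y₃ with Y₁ = ((1+cos²α)/cos²α)|0⟩⟨0| + (1+cos²α)|1⟩⟨1|, Y₂ = (2 − sec²α)|0⟩⟨0| + (sec²α − sin²α)|1⟩⟨1| + (1+cos²α) sec²α |2⟩⟨2|, Y₃ = |00⟩⟨22| + |22⟩⟨00|. Then Y − |Φ⟩⟨Φ| ≥ 0, where |Φ⟩ = |00⟩ + |11⟩ + |22⟩. -/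

import Mathlib

open Matrix Kronecker Complex ComplexOrder

noncomputable section

abbrev M3 : Type := Matrix (Fin 3) (Fin 3) ℂ
abbrev M9 : Type := Matrix (Fin 3 × Fin 3) (Fin 3 × Fin 3) ℂ

/-- |i⟩⟨j| on ℂ³ -/
def ket (i j : Fin 3) : M3 := Matrix.single i j 1

def E (α : ℝ) : M3 := (Real.sin α : ℂ) • ket 0 1 + ket 1 2
def D (α : ℝ) : M3 := (Real.cos α : ℂ) • ket 2 1 + ket 1 0

def u (α : ℝ) : Fin 3 × Fin 3 → ℂ := fun p =>
  (((if p = (1,0) then Real.sin α else 0) + (if p = (2,1) then 1 else 0)) /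
    Real.sqrt (1 + Real.sin α ^ 2) : ℝ)

def v (α : ℝ) : Fin 3 × Fin 3 → ℂ := fun p =>
  (((if p = (1,2) then Real.cos α else 0) + (if p = (0,1) then 1 else 0)) /
    Real.sqrt (1 + Real.cos α ^ 2) : ℝ)

/-- Projection onto span{|u_α⟩, |v_α⟩}, the support of the Choi matrix of N_α. -/
def Pproj (α : ℝ) : M9 :=
  vecMulVec (u α) (star (u α)) + vecMulVec (v α) (star (v α))

/-- Partial trace over the first (A) factor. -/
def trA (M : M9) : M3 := fun i j => ∑ k, M (k, i) (k, j)

/-- Partial trace over the second (B) factor. -/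
def trB (M : M9) : M3 := fun i j => ∑ k, M (i, k) (j, k)

def Phi : Fin 3 × Fin 3 → ℂ := fun p => if p.1 = p.2 then 1 else 0

def Y1 (α : ℝ) : M3 :=
  (((1 + Real.cos α ^ 2) / Real.cos α ^ 2 : ℝ) : ℂ) • ket 0 0 +
  ((1 + Real.cos α ^ 2 : ℝ) : ℂ) • ket 1 1

def Y2 (α : ℝ) : M3 :=
  ((2 - 1 / Real.cos α ^ 2 : ℝ) : ℂ) • ket 0 0 +
  ((1 / Real.cos α ^ 2 - Real.sin α ^ 2 : ℝ) : ℂ) • ket 1 1 +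
  (((1 + Real.cos α ^ 2) / Real.cos α ^ 2 : ℝ) : ℂ) • ket 2 2

def Y3 : M9 := ket 0 2 ⊗ₖ ket 0 2 + ket 2 0 ⊗ₖ ket 2 0

def Ymat (α : ℝ) : M9 :=
  Y1 α ⊗ₖ (ket 0 0 + ket 1 1) + Y2 α ⊗ₖ ket 2 2 +
  (((1 + Real.cos α ^ 2) / Real.cos α ^ 2 : ℝ) : ℂ) • Y3

/-! On the span of `|00⟩, |11⟩, |22⟩`, `Y - |Φ⟩⟨Φ|` is the rank-one matrix `w w*` with
`w = (-sec α, cos α, -sec α)`; on the remaining basis vectors it is diagonal. The diagonal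
weights are nonnegative exactly when `cos² α ≥ 1/2`, which is where `α ≤ π/4` enters. -/

theorem half_le_cos_sq {α : ℝ} (h₁ : -(Real.pi / 4) ≤ α) (h₂ : α ≤ Real.pi / 4) :
    1 / 2 ≤ Real.cos α ^ 2 := by
  have : 0 ≤ Real.cos (2 * α) :=
    Real.cos_nonneg_of_neg_pi_div_two_le_of_le (by linarith) (by linarith)
  rw [Real.cos_sq]
  linarith

def diagWeights (α : ℝ) : Fin 3 × Fin 3 → ℝ := fun p =>
  ![![0, (1 + Real.cos α ^ 2) / Real.cos α ^ 2, 2 - 1 / Real.cos α ^ 2],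
    ![1 + Real.cos α ^ 2, 0, 1 / Real.cos α ^ 2 - Real.sin α ^ 2],
    ![0, 0, 0]] p.1 p.2

def blockVec (α : ℝ) : Fin 3 × Fin 3 → ℂ := fun p =>
  ((if p.1 ≠ p.2 then 0 else if p.1 = 1 then Real.cos α else -1 / Real.cos α : ℝ) : ℂ)

theorem diagWeights_nonneg {α : ℝ} (h : 1 / 2 ≤ Real.cos α ^ 2) : 0 ≤ diagWeights α := by
  have hc : 0 < Real.cos α ^ 2 := by linarith
  rintro ⟨i, j⟩
  fin_cases i <;> fin_cases j <;> simp [diagWeights]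
  · positivity
  · rw [inv_le_iff_one_le_mul₀ hc]
    linarith
  · positivity
  · nlinarith [Real.sin_sq_le_one α, one_le_inv_iff₀.mpr ⟨hc, Real.cos_sq_le_one α⟩]

theorem Ymat_sub_eq_diagonal_add_vecMulVec {α : ℝ} (hc : Real.cos α ≠ 0) :
    Ymat α - vecMulVec Phi (star Phi) =
      diagonal (fun p => (diagWeights α p : ℂ)) + vecMulVec (blockVec α) (star (blockVec α)) := by
  have hcC : Complex.cos α ≠ 0 := by exact_mod_cast hc
  ext ⟨i, j⟩ ⟨k, l⟩
  fin_cases i <;> fin_cases j <;> fin_cases k <;> fin_cases l <;>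
    simp [Ymat, Y1, Y2, Y3, ket, Phi, diagWeights, blockVec, vecMulVec_apply,
      kroneckerMap_apply, ← Complex.cos_conj] <;> field_simp <;> ring

theorem lovasz_dual_psd (α : ℝ) (hα : 0 < α) (hα' : α ≤ Real.pi / 4) :
    (Ymat α - vecMulVec Phi (star Phi)).PosSemidef := by
  have hcos : 1 / 2 ≤ Real.cos α ^ 2 := half_le_cos_sq (by linarith [Real.pi_pos]) hα'
  have hc : Real.cos α ≠ 0 := fun h => by norm_num [h] at hcos
  rw [Ymat_sub_eq_diagonal_add_vecMulVec hc]
  refine (PosSemidef.diagonal fun p => ?_).add (posSemidef_vecMulVec_self_star _)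
  exact Complex.zero_le_real.mpr (diagWeights_nonneg hcos p)
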